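/- The matrices B₁, B₂ and A satisfy B₂ − [A, B₁]/(2(ℓ+1)) = 2 Σ_{m=−ℓ}^{ℓ} q_{ℓ,−m} E_{(ℓ,m),(ℓ+1,m+1)} and B₂ + [A, B₁]/(2(ℓ+1)) = 2 Σ_{m=−ℓ}^{ℓ} q_{ℓ,m} E_{(ℓ,m),(ℓ+1,m−1)}. -/

import Mathlib

open Matrix

/-- The index set `J_ℓ = {(j,k) : j ∈ {ℓ, ℓ+1}, -j ≤ k ≤ j}`. -/
noncomputable def Jset (l : ℕ) : Finset (ℤ × ℤ) :=
  (({(l : ℤ), (l : ℤ) + 1} : Finset ℤ) ×ˢ Finset.Icc (-((l : ℤ) + 1)) ((l : ℤ) + 1)).filter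
    fun x => -x.1 ≤ x.2 ∧ x.2 ≤ x.1

/-- The space of complex matrices indexed by `J_ℓ`. -/
abbrev Mat (l : ℕ) := Matrix (Jset l) (Jset l) ℂ

/-- `e_{a,b}`: matrix with a single entry `1` at position `(a,b)`. -/
def eM (l : ℕ) (a b : ℤ × ℤ) : Mat l :=
  fun x y => if (x : ℤ × ℤ) = a ∧ (y : ℤ × ℤ) = b then 1 else 0

/-- `E_{a,b} = e_{a,b} - e_{b,a}`. -/
def Em (l : ℕ) (a b : ℤ × ℤ) : Mat l := eM l a b - eM l b a

/-- `F_{a,b} = i e_{a,b} + i e_{b,a}`. -/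
def Fm (l : ℕ) (a b : ℤ × ℤ) : Mat l := Complex.I • eM l a b + Complex.I • eM l b a

/-- `D_{a,b} = i e_{a,a} - i e_{b,b}`. -/
def Dm (l : ℕ) (a b : ℤ × ℤ) : Mat l := Complex.I • eM l a a - Complex.I • eM l b b

/-- `p_{ℓ,m} = -√(((ℓ+1)² - m²)/((2ℓ+1)(2ℓ+3)))`. -/
noncomputable def pc (l : ℕ) (m : ℤ) : ℝ :=
  -Real.sqrt ((((l : ℝ) + 1) ^ 2 - (m : ℝ) ^ 2) / ((2 * (l : ℝ) + 1) * (2 * (l : ℝ) + 3)))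

/-- `q_{ℓ,m} = √(((ℓ-m+2)(ℓ-m+1))/(4(2ℓ+1)(2ℓ+3)))`. -/
noncomputable def qc (l : ℕ) (m : ℤ) : ℝ :=
  Real.sqrt (((l : ℝ) - (m : ℝ) + 2) * ((l : ℝ) - (m : ℝ) + 1) /
    (4 * (2 * (l : ℝ) + 1) * (2 * (l : ℝ) + 3)))

/-- The control potential `B₁`. -/
noncomputable def B1 (l : ℕ) : Mat l :=
  ∑ m ∈ Finset.Icc (-(l : ℤ)) (l : ℤ),
    ((-qc l m) • Fm l ((l : ℤ), m) ((l : ℤ) + 1, m - 1)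
      + qc l (-m) • Fm l ((l : ℤ), m) ((l : ℤ) + 1, m + 1))

/-- The control potential `B₂`. -/
noncomputable def B2 (l : ℕ) : Mat l :=
  ∑ m ∈ Finset.Icc (-(l : ℤ)) (l : ℤ),
    (qc l m • Em l ((l : ℤ), m) ((l : ℤ) + 1, m - 1)
      + qc l (-m) • Em l ((l : ℤ), m) ((l : ℤ) + 1, m + 1))

/-- The control potential `B₃`. -/
noncomputable def B3 (l : ℕ) : Mat l :=
  ∑ m ∈ Finset.Icc (-(l : ℤ)) (l : ℤ), pc l m • Fm l ((l : ℤ), m) ((l : ℤ) + 1, m)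

/-- The (traceless) drift matrix `A`. -/
noncomputable def Am (l : ℕ) : Mat l :=
  (∑ k ∈ Finset.Icc (-(l : ℤ)) (l : ℤ),
      (Complex.I * (2 * (l : ℂ) + 3) / 2) • eM l ((l : ℤ), k) ((l : ℤ), k))
    + ∑ k ∈ Finset.Icc (-((l : ℤ) + 1)) ((l : ℤ) + 1),
      (-(Complex.I * (2 * (l : ℂ) + 1) / 2)) • eM l ((l : ℤ) + 1, k) ((l : ℤ) + 1, k)

/-! `A` is diagonal, with eigenvalue `i(2ℓ+3)/2` on the block `j = ℓ` and `-i(2ℓ+1)/2` on the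
block `j = ℓ+1`. Hence `ad_A` multiplies `e_{a,b}` (with `a` in the first block and `b` in the
second) by the eigenvalue gap `i(2ℓ+2)` and `e_{b,a}` by its negative, so that
`[A, F_{a,b}] = -2(ℓ+1) E_{a,b}`. Thus `[A, B₁]/(2(ℓ+1))` is `B₂` with the sign of its
`q_{ℓ,-m}` terms flipped, and both identities follow by adding and subtracting. -/

lemma mem_Jset {l : ℕ} {x : ℤ × ℤ} :
    x ∈ Jset l ↔ (x.1 = l ∨ x.1 = l + 1) ∧ -x.1 ≤ x.2 ∧ x.2 ≤ x.1 := by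
  simp only [Jset, Finset.mem_filter, Finset.mem_product, Finset.mem_insert,
    Finset.mem_singleton, Finset.mem_Icc]
  omega

theorem Matrix.lie_diagonal_apply {n R : Type*} [Fintype n] [DecidableEq n] [CommRing R]
    (d : n → R) (M : Matrix n n R) (i j : n) :
    ⁅diagonal d, M⁆ i j = (d i - d j) * M i j := by
  rw [Ring.lie_def, sub_apply, diagonal_mul, mul_diagonal]
  ring

lemma lie_diagonal_eM {l : ℕ} (d : Jset l → ℂ) (c : ℂ) (a b : ℤ × ℤ)
    (hd : ∀ x y : Jset l, (x : ℤ × ℤ) = a → (y : ℤ × ℤ) = b → d x - d y = c) :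
    ⁅diagonal d, eM l a b⁆ = c • eM l a b := by
  ext x y
  rw [lie_diagonal_apply, Matrix.smul_apply, eM, smul_eq_mul]
  split_ifs with hxy
  · rw [hd x y hxy.1 hxy.2]
  · simp

lemma sum_smul_eM_self (l : ℕ) (j : ℤ) (s : Finset ℤ) (c : ℂ) :
    ∑ k ∈ s, c • eM l (j, k) (j, k) =
      diagonal fun x : Jset l => if (x : ℤ × ℤ).1 = j ∧ (x : ℤ × ℤ).2 ∈ s then c else 0 := by
  ext x y
  simp only [Matrix.sum_apply, Matrix.smul_apply, eM, diagonal_apply, smul_eq_mul, mul_ite,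
    mul_one, mul_zero]
  by_cases hxy : x = y
  · subst hxy
    by_cases hj : (x : ℤ × ℤ).1 = j <;> simp [Prod.ext_iff, hj]
  · rw [if_neg hxy]
    refine Finset.sum_eq_zero fun k _ => if_neg ?_
    rintro ⟨hx, hy⟩
    exact hxy (Subtype.ext (hx.trans hy.symm))

-- `α_{(j,k)}`; on `J_ℓ`, the `else` branch is exactly the block `j = ℓ + 1`.
noncomputable def driftEigenvalue (l : ℕ) (x : ℤ × ℤ) : ℂ :=
  if x.1 = l then Complex.I * (2 * (l : ℂ) + 3) / 2 else -(Complex.I * (2 * (l : ℂ) + 1) / 2)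

lemma Am_eq_diagonal (l : ℕ) : Am l = diagonal fun x : Jset l => driftEigenvalue l x := by
  rw [Am, sum_smul_eM_self, sum_smul_eM_self, diagonal_add]
  congr 1
  funext x
  obtain ⟨hj, hk⟩ := mem_Jset.1 x.2
  simp only [driftEigenvalue, Finset.mem_Icc]
  split_ifs <;> first | omega | ring

section

attribute [local instance 100] LieRing.ofAssociativeRing

lemma lie_Am_Fm (l : ℕ) (a b : ℤ × ℤ) (ha : a.1 = l) (hb : b.1 = l + 1) :
    ⁅Am l, Fm l a b⁆ = (-(2 * (l : ℝ) + 2)) • Em l a b := by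
  have hgap : driftEigenvalue l a - driftEigenvalue l b = Complex.I * (2 * l + 2) := by
    simp only [driftEigenvalue, ha, hb, if_true, add_eq_left, one_ne_zero, if_false]
    ring
  rw [Fm, lie_add, lie_smul, lie_smul, Am_eq_diagonal,
    lie_diagonal_eM _ (Complex.I * (2 * l + 2)) a b (by rintro x y rfl rfl; exact hgap),
    lie_diagonal_eM _ (-(Complex.I * (2 * l + 2))) b a
      (by rintro x y rfl rfl; rw [← hgap]; ring), Em]
  match_scalars
  · linear_combination (2 * (l : ℂ) + 2) * Complex.I_sq
  · linear_combination -(2 * (l : ℂ) + 2) * Complex.I_sq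

lemma smul_lie_Am_B1 (l : ℕ) :
    (2 * ((l : ℝ) + 1))⁻¹ • ⁅Am l, B1 l⁆ =
      ∑ m ∈ Finset.Icc (-(l : ℤ)) (l : ℤ),
        (qc l m • Em l ((l : ℤ), m) ((l : ℤ) + 1, m - 1)
          - qc l (-m) • Em l ((l : ℤ), m) ((l : ℤ) + 1, m + 1)) := by
  rw [B1, lie_sum, Finset.smul_sum]
  refine Finset.sum_congr rfl fun m _ => ?_
  rw [lie_add, lie_smul, lie_smul, lie_Am_Fm l _ _ rfl rfl, lie_Am_Fm l _ _ rfl rfl]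
  have hl : (2 * ((l : ℝ) + 1)) ≠ 0 := by positivity
  match_scalars <;> field_simp

end

/-- `B₂ - [A,B₁]/(2(ℓ+1)) = 2 ∑_{m=-ℓ}^{ℓ} q_{ℓ,-m} E_{(ℓ,m),(ℓ+1,m+1)}` and
`B₂ + [A,B₁]/(2(ℓ+1)) = 2 ∑_{m=-ℓ}^{ℓ} q_{ℓ,m} E_{(ℓ,m),(ℓ+1,m-1)}`. -/
theorem B2_pm_bracket (l : ℕ) :
    B2 l - (2 * ((l : ℝ) + 1))⁻¹ • ⁅Am l, B1 l⁆ =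
        (2 : ℝ) • ∑ m ∈ Finset.Icc (-(l : ℤ)) (l : ℤ),
          qc l (-m) • Em l ((l : ℤ), m) ((l : ℤ) + 1, m + 1) ∧
      B2 l + (2 * ((l : ℝ) + 1))⁻¹ • ⁅Am l, B1 l⁆ =
        (2 : ℝ) • ∑ m ∈ Finset.Icc (-(l : ℤ)) (l : ℤ),
          qc l m • Em l ((l : ℤ), m) ((l : ℤ) + 1, m - 1) := by
  rw [smul_lie_Am_B1, B2, ← Finset.sum_sub_distrib, ← Finset.sum_add_distrib, Finset.smul_sum,
    Finset.smul_sum]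
  constructor <;> refine Finset.sum_congr rfl fun m _ => ?_ <;> module
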